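/- arXiv:1108.1894 — 6 statements merged into one kernel-verified Lean document; each statement's English description precedes it below -/
import Mathlib

section
/- Let p be a prime, X a finite group, and H a strongly p-embedded subgroup of X (i.e. p divides |H| and p does not divide |H ∩ H^g| for all g ∈ X \ H). If x ∈ H, y ∈ x^X ∩ H, and p divides both |C_H(x)| and |C_H(y)|, then y ∈ x^H (y is conjugate to x by an element of H). -/
/-!
Pick `a ∈ C_H(x)` and `b ∈ C_H(y)` of order `p`, and `g` with `xᵍ = y`. An element `b ∈ H`
of order `p` with `bᵍ ∈ H` forces `g ∈ H`; with the normalizer condition this shows that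
every `p`-subgroup meeting `H` in an element of order `p` lies in `H`. Hence a Sylow
`p`-subgroup `S` of `C_X(y)` containing `b` lies in `H`, and by Sylow's theorem some
`c ∈ C_X(y)` conjugates `aᵍ ∈ C_X(y)` into `S`. Then `a` and `a^{gc}` both lie in `H`, so
`gc ∈ H`, and `x^{gc} = y^c = y`.
-/

open Subgroup Pointwise

section

variable {X : Type*} [Group X] {p : ℕ} {H : Subgroup X}

theorem exists_mem_orderOf_eq_of_dvd_natCard [Finite X] (hp : p.Prime) {K : Subgroup X}
    (hK : p ∣ Nat.card K) : ∃ a ∈ K, orderOf a = p := by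
  have := Fact.mk hp
  obtain ⟨a, ha⟩ := exists_prime_orderOf_dvd_card' p hK
  exact ⟨a, a.2, by rwa [← orderOf_coe] at ha⟩

theorem Sylow.exists_conj_mem {G : Type*} [Group G] [Finite G] [Fact p.Prime] (S : Sylow p G)
    {a : G} {n : ℕ} (ha : orderOf a = p ^ n) : ∃ c : G, c⁻¹ * a * c ∈ S := by
  obtain ⟨P, hP⟩ := (IsPGroup.of_card ((Nat.card_zpowers a).trans ha)).exists_le_sylow
  obtain ⟨c, rfl⟩ := MulAction.exists_smul_eq G S P
  have haP : a ∈ MulAut.conj c • (S : Subgroup G) := hP (mem_zpowers a)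
  rw [mem_pointwise_smul_iff_inv_smul_mem] at haP
  simp only [MulAut.smul_def] at haP
  exact ⟨c, haP⟩

theorem mem_of_orderOf_eq_of_conj_mem
    (hemb : ∀ g : X, g ∉ H →
      ¬ p ∣ Nat.card (H ⊓ Subgroup.map (MulAut.conj g).toMonoidHom H : Subgroup X))
    {b g : X} (hb : orderOf b = p) (hbH : b ∈ H) (hgb : g⁻¹ * b * g ∈ H) : g ∈ H := by
  by_contra hg
  have hmem : b ∈ H ⊓ map (MulAut.conj g).toMonoidHom H :=
    ⟨hbH, g⁻¹ * b * g, hgb, by simp [mul_assoc]⟩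
  exact hemb g hg (hb ▸ orderOf_mk b hmem ▸ orderOf_dvd_natCard _)

theorem le_of_isPGroup_of_orderOf_eq [Finite X] [Fact p.Prime]
    (hemb : ∀ g : X, g ∉ H →
      ¬ p ∣ Nat.card (H ⊓ Subgroup.map (MulAut.conj g).toMonoidHom H : Subgroup X))
    {Q : Subgroup X} (hQ : IsPGroup p Q) {b : X} (hbQ : b ∈ Q) (hbH : b ∈ H)
    (hb : orderOf b = p) : Q ≤ H := by
  by_contra hQH
  have hK : H.subgroupOf Q < ⊤ := lt_top_iff_ne_top.mpr (mt subgroupOf_eq_top.mp hQH)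
  have := hQ.isNilpotent
  obtain ⟨n, hnN, hnK⟩ := SetLike.exists_of_lt (Group.normalizerCondition_of_isNilpotent _ hK)
  refine hnK (mem_subgroupOf.mpr (mem_of_orderOf_eq_of_conj_mem hemb hb hbH ?_))
  exact mem_subgroupOf.mp ((mem_normalizer_iff''.mp hnN ⟨b, hbQ⟩).mp (mem_subgroupOf.mpr hbH))

theorem exists_conj_mem_of_orderOf_eq_pow [Finite X] [Fact p.Prime]
    (hemb : ∀ g : X, g ∉ H →
      ¬ p ∣ Nat.card (H ⊓ Subgroup.map (MulAut.conj g).toMonoidHom H : Subgroup X))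
    {C : Subgroup X} {b : X} (hbC : b ∈ C) (hbH : b ∈ H) (hb : orderOf b = p)
    {a : X} {n : ℕ} (haC : a ∈ C) (ha : orderOf a = p ^ n) : ∃ c ∈ C, c⁻¹ * a * c ∈ H := by
  have hB : orderOf (⟨b, hbC⟩ : C) = p ^ 1 := by rw [orderOf_mk, hb, pow_one]
  obtain ⟨S, hS⟩ := (IsPGroup.of_card ((Nat.card_zpowers _).trans hB)).exists_le_sylow
  have hSH : S.map C.subtype ≤ H :=
    le_of_isPGroup_of_orderOf_eq hemb (S.isPGroup'.map _) ⟨_, hS (mem_zpowers _), rfl⟩ hbH hb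
  obtain ⟨c, hc⟩ := S.exists_conj_mem (a := ⟨a, haC⟩) (by rwa [orderOf_mk])
  exact ⟨c, c.2, hSH ⟨_, hc, rfl⟩⟩

end

theorem stmt_2_general {X : Type*} [Group X] [Finite X] {p : ℕ} (hp : p.Prime)
    (H : Subgroup X)
    (hemb : ∀ g : X, g ∉ H →
      ¬ p ∣ Nat.card (H ⊓ Subgroup.map (MulAut.conj g).toMonoidHom H : Subgroup X))
    (x y : X) (hxy : ∃ g : X, g⁻¹ * x * g = y)
    (hcx : p ∣ Nat.card (H ⊓ Subgroup.centralizer {x} : Subgroup X))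
    (hcy : p ∣ Nat.card (H ⊓ Subgroup.centralizer {y} : Subgroup X)) :
    ∃ h ∈ H, h⁻¹ * x * h = y := by
  have := Fact.mk hp
  obtain ⟨g, hg⟩ := hxy
  obtain ⟨a, haK, ha⟩ := exists_mem_orderOf_eq_of_dvd_natCard hp hcx
  obtain ⟨b, hbK, hb⟩ := exists_mem_orderOf_eq_of_dvd_natCard hp hcy
  obtain ⟨haH, hax⟩ := mem_inf.mp haK
  obtain ⟨hbH, hby⟩ := mem_inf.mp hbK
  have hay : g⁻¹ * a * g ∈ centralizer {y} := by
    rw [mem_centralizer_singleton_iff] at hax ⊢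
    rw [← hg]
    simp only [mul_assoc, mul_inv_cancel_left]
    rw [← mul_assoc a, hax, mul_assoc]
  have ha' : orderOf (g⁻¹ * a * g) = p ^ 1 := by
    rw [pow_one, ← ha]
    exact (SemiconjBy.orderOf_eq g⁻¹ (by simp [SemiconjBy, mul_assoc])).symm
  obtain ⟨c, hcy, hc⟩ := exists_conj_mem_of_orderOf_eq_pow hemb hby hbH hb hay ha'
  refine ⟨g * c, mem_of_orderOf_eq_of_conj_mem hemb ha haH (by simpa [mul_assoc] using hc), ?_⟩
  rw [mem_centralizer_singleton_iff] at hcy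
  calc (g * c)⁻¹ * x * (g * c) = c⁻¹ * (g⁻¹ * x * g) * c := by group
    _ = y := by rw [hg, mul_assoc, ← hcy, inv_mul_cancel_left]

theorem stmt_2 {X : Type*} [Group X] [Finite X] {p : ℕ} (hp : p.Prime)
    (H : Subgroup X)
    (hdvd : p ∣ Nat.card H)
    (hemb : ∀ g : X, g ∉ H →
      ¬ p ∣ Nat.card (H ⊓ Subgroup.map (MulAut.conj g).toMonoidHom H : Subgroup X))
    (x y : X) (hx : x ∈ H) (hy : y ∈ H) (hxy : ∃ g : X, g⁻¹ * x * g = y)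
    (hcx : p ∣ Nat.card (H ⊓ Subgroup.centralizer {x} : Subgroup X))
    (hcy : p ∣ Nat.card (H ⊓ Subgroup.centralizer {y} : Subgroup X)) :
    ∃ h ∈ H, h⁻¹ * x * h = y :=
  stmt_2_general hp H hemb x y hxy hcx hcy
end

section
/- Let p be a prime, G a finite group, P a Sylow p-subgroup of G, and let J = J(P) be the Thompson subgroup of P (the subgroup generated by all abelian subgroups of P of maximal order). Assume J is elementary abelian. Then N_G(J) controls G-fusion in J: for any x, y ∈ J with y = x^g for some g ∈ G, there exists n ∈ N_G(J) with y = x^n. -/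
/-- The subgroup `A` is abelian (as a set of elements of `G`). -/
def IsCommSub {G : Type*} [Group G] (A : Subgroup G) : Prop :=
  ∀ x ∈ A, ∀ y ∈ A, x * y = y * x

/-- The Thompson subgroup `J(P)`: the subgroup generated by the abelian subgroups
of `P` of maximal order. -/
def ThompsonSubgroup {G : Type*} [Group G] (P : Subgroup G) : Subgroup G :=
  ⨆ A ∈ {A : Subgroup G | A ≤ P ∧ IsCommSub A ∧
    ∀ B : Subgroup G, B ≤ P → IsCommSub B → Nat.card B ≤ Nat.card A}, A

/-!
Write `J = J(P)`. If `y = x^g` with `x, y ∈ J`, then `J` and `J^g` are abelian subgroups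
containing `y`, hence `p`-subgroups of `C_G(y)`. Sylow's theorem in `C_G(y)` gives
`c ∈ C_G(y)` such that `J` and `J^{gc}` lie in one Sylow subgroup `Q = P^h` of `G`.
An abelian `J(P)` is weakly closed in `P`: a conjugate of it inside `P` is an abelian subgroup
of maximal order, so it lies in `J(P)` and, having the same order, equals it. Applied in `Q`,
this gives `J^{gc} = J`, and `n = gc` still conjugates `x` to `y` since `c` centralizes `y`.
-/

open Subgroup Pointwise

theorem IsCommSub.map {G H : Type*} [Group G] [Group H] {A : Subgroup G} (hA : IsCommSub A)
    (f : G →* H) : IsCommSub (A.map f) := by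
  rintro _ ⟨u, hu, rfl⟩ _ ⟨v, hv, rfl⟩
  rw [← map_mul, ← map_mul, hA u hu v hv]

theorem IsCommSub.le_centralizer {G : Type*} [Group G] {A : Subgroup G} (hA : IsCommSub A)
    {x : G} (hx : x ∈ A) : A ≤ centralizer {x} := fun w hw =>
  mem_centralizer_singleton_iff.2 (hA w hw x hx)

section Thompson

variable {G : Type*} [Group G]

theorem thompsonSubgroup_le (P : Subgroup G) : ThompsonSubgroup P ≤ P :=
  iSup₂_le fun _ hA => hA.1

theorem le_thompsonSubgroup {P A : Subgroup G} (hAP : A ≤ P) (hA : IsCommSub A)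
    (hmax : ∀ B : Subgroup G, B ≤ P → IsCommSub B → Nat.card B ≤ Nat.card A) :
    A ≤ ThompsonSubgroup P :=
  le_iSup₂_of_le A ⟨hAP, hA, hmax⟩ le_rfl

theorem card_le_card_thompsonSubgroup [Finite G] {P B : Subgroup G} (hBP : B ≤ P)
    (hB : IsCommSub B) : Nat.card B ≤ Nat.card (ThompsonSubgroup P) := by
  have : Finite (Subgroup G) := Finite.of_injective _ SetLike.coe_injective
  have : Nonempty {A : Subgroup G // A ≤ P ∧ IsCommSub A} :=
    ⟨⊥, bot_le, fun x hx y hy => by rw [mem_bot] at hx hy; simp [hx, hy]⟩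
  obtain ⟨⟨A, hAP, hA⟩, hmax⟩ :=
    Finite.exists_max fun A : {A : Subgroup G // A ≤ P ∧ IsCommSub A} => Nat.card A.1
  calc Nat.card B ≤ Nat.card A := hmax ⟨B, hBP, hB⟩
    _ ≤ Nat.card (ThompsonSubgroup P) :=
      card_le_of_le (le_thompsonSubgroup hAP hA fun B hB hBc => hmax ⟨B, hB, hBc⟩)

theorem mem_normalizer_thompsonSubgroup_of_conj_smul_le [Finite G] {P : Subgroup G}
    (hJ : IsCommSub (ThompsonSubgroup P)) {a : G}
    (ha : MulAut.conj a • ThompsonSubgroup P ≤ P) :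
    a ∈ normalizer (ThompsonSubgroup P : Set G) := by
  have hcard : Nat.card (MulAut.conj a • ThompsonSubgroup P : Subgroup G) =
      Nat.card (ThompsonSubgroup P) :=
    card_map_of_injective (MulAut.conj a).injective
  have hle : MulAut.conj a • ThompsonSubgroup P ≤ ThompsonSubgroup P := by
    refine le_thompsonSubgroup ha (hJ.map _) fun B hBP hB => ?_
    rw [hcard]
    exact card_le_card_thompsonSubgroup hBP hB
  exact mem_normalizer_iff_map_conj_eq.2 (eq_of_le_of_card_ge hle hcard.ge)

end Thompson

section Sylow

variable {G : Type*} [Group G] [Finite G] {p : ℕ} [Fact p.Prime]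

theorem exists_sylow_le_and_conj_smul_le {C H K : Subgroup G} (hH : IsPGroup p H)
    (hK : IsPGroup p K) (hHC : H ≤ C) (hKC : K ≤ C) :
    ∃ c ∈ C, ∃ Q : Sylow p G, H ≤ Q ∧ MulAut.conj c • K ≤ Q := by
  obtain ⟨S, hHS⟩ := (hH.comap_subtype (K := C)).exists_le_sylow
  obtain ⟨T, hKT⟩ := (hK.comap_subtype (K := C)).exists_le_sylow
  obtain ⟨c, rfl⟩ := MulAction.exists_smul_eq C T S
  obtain ⟨Q, hQ⟩ := (c • T).exists_comap_subtype_eq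
  refine ⟨c, c.2, Q, fun h hh => ?_, ?_⟩
  · have : (⟨h, hHC hh⟩ : C) ∈ (Q : Subgroup G).comap C.subtype := hQ ▸ hHS hh
    exact this
  · rintro _ ⟨k, hk, rfl⟩
    have : MulAut.conj c ⟨k, hKC hk⟩ ∈ (Q : Subgroup G).comap C.subtype :=
      hQ ▸ smul_mem_pointwise_smul _ _ _ (hKT hk)
    exact this

theorem mem_normalizer_thompsonSubgroup_of_le_sylow {P Q : Sylow p G}
    (hJ : IsCommSub (ThompsonSubgroup (P : Subgroup G))) {a : G}
    (hJQ : ThompsonSubgroup (P : Subgroup G) ≤ Q)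
    (haQ : MulAut.conj a • ThompsonSubgroup (P : Subgroup G) ≤ Q) :
    a ∈ normalizer (ThompsonSubgroup (P : Subgroup G) : Set G) := by
  obtain ⟨h, rfl⟩ := MulAction.exists_smul_eq G P Q
  have hconj : ∀ b : G, MulAut.conj b • ThompsonSubgroup (P : Subgroup G) ≤ ↑(h • P) →
      h⁻¹ * b ∈ normalizer (ThompsonSubgroup (P : Subgroup G) : Set G) := by
    intro b hb
    refine mem_normalizer_thompsonSubgroup_of_conj_smul_le hJ ?_
    rw [Sylow.coe_subgroup_smul, subset_pointwise_smul_iff, smul_smul, ← map_inv,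
      ← map_mul] at hb
    exact hb
  have h₁ := hconj 1 (by rwa [map_one, one_smul])
  have h₂ := hconj a haQ
  simpa using mul_mem (inv_mem h₁) h₂

end Sylow

theorem stmt_3_general {G : Type*} [Group G] [Finite G] {p : ℕ} [Fact p.Prime]
    (P : Sylow p G)
    (hJab : IsCommSub (ThompsonSubgroup (P : Subgroup G))) :
    ∀ x ∈ ThompsonSubgroup (P : Subgroup G), ∀ y ∈ ThompsonSubgroup (P : Subgroup G),
      (∃ g : G, g⁻¹ * x * g = y) →
        ∃ n ∈ Subgroup.normalizer (ThompsonSubgroup (P : Subgroup G) : Set G), n⁻¹ * x * n = y := by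
  rintro x hx _ hy ⟨g, rfl⟩
  have hJp : IsPGroup p (ThompsonSubgroup (P : Subgroup G)) :=
    P.2.to_le (thompsonSubgroup_le _)
  have hy' : g⁻¹ * x * g ∈ MulAut.conj g⁻¹ • ThompsonSubgroup (P : Subgroup G) :=
    ⟨x, hx, by simp⟩
  obtain ⟨c, hc, Q, hJQ, hcQ⟩ :=
    exists_sylow_le_and_conj_smul_le (K := MulAut.conj g⁻¹ • ThompsonSubgroup (P : Subgroup G))
      hJp (hJp.map _) (hJab.le_centralizer hy) ((hJab.map _).le_centralizer hy')
  rw [smul_smul, ← map_mul] at hcQ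
  refine ⟨(c * g⁻¹)⁻¹, inv_mem (mem_normalizer_thompsonSubgroup_of_le_sylow hJab hJQ hcQ), ?_⟩
  rw [inv_inv, mul_inv_rev, inv_inv,
    show c * g⁻¹ * x * (g * c⁻¹) = c * (g⁻¹ * x * g) * c⁻¹ by group,
    mem_centralizer_singleton_iff.1 hc, mul_inv_cancel_right]

theorem stmt_3 {G : Type*} [Group G] [Finite G] {p : ℕ} [Fact p.Prime]
    (P : Sylow p G)
    (hJab : IsCommSub (ThompsonSubgroup (P : Subgroup G)))
    (hJexp : ∀ x ∈ ThompsonSubgroup (P : Subgroup G), x ^ p = 1) :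
    ∀ x ∈ ThompsonSubgroup (P : Subgroup G), ∀ y ∈ ThompsonSubgroup (P : Subgroup G),
      (∃ g : G, g⁻¹ * x * g = y) →
        ∃ n ∈ Subgroup.normalizer (ThompsonSubgroup (P : Subgroup G) : Set G), n⁻¹ * x * n = y :=
  stmt_3_general P hJab
end

section
/- Let D = Q₈ × Q₈ × Q₈ (direct product of three quaternion groups of order 8), let σ be the automorphism of D cyclically permuting the three direct factors, and let R ≤ D be a subgroup of order 2⁷ with Z(D) ≤ R and R invariant under σ. Then Z(D) ≤ Φ(R), the Frattini subgroup of R. -/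
/-- `Q₈ × Q₈ × Q₈`, the direct product of three quaternion groups of order 8. -/
abbrev QQQ : Type := QuaternionGroup 2 × QuaternionGroup 2 × QuaternionGroup 2

/-- The automorphism of `Q₈ × Q₈ × Q₈` cyclically permuting the three direct factors. -/
def cycQ : QQQ ≃* QQQ where
  toFun x := (x.2.2, x.1, x.2.1)
  invFun x := (x.2.1, x.2.2, x.1)
  left_inv _ := rfl
  right_inv _ := rfl
  map_mul' _ _ := rfl

/-- The Frattini subgroup of a subgroup `R` of `G`: the intersection of the
maximal subgroups of `R`. -/
def frattiniOf {G : Type*} [Group G] (R : Subgroup G) : Subgroup G :=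
  ⨅ M ∈ {M : Subgroup G | M < R ∧ ∀ K : Subgroup G, M < K → K ≤ R → K = R}, M

/-!
Since `R` is a `2`-group, each of its maximal subgroups has index `2` and so contains every square
of `R`; it therefore suffices that the squares of `R` generate `Z(D) ≅ 𝔽₂³`. The subgroup `S` they
generate is `σ`-invariant. If it missed `r₁`, it would contain no element of weight one, so either
all squares of `R` lie in `{1, r₁r₂r₃}` or all have even weight. In the first case the elements of
`R` with central first coordinate are central, so `|R| ≤ 4 · 8`. In the second, applying the
parity condition to `w` and `w σ(w)` shows that the elements of `R` with central first coordinate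
have second and third coordinates congruent modulo `Z(Q₈)`; counting then puts `(1, i, i)` and
`(1, j, j)` in `R`, and `(1, j, j) σ(1, i, i) = (i, j, ji)` has odd weight.
-/

open Subgroup

section Frattini

variable {G : Type*} [Group G]

theorem Subgroup.index_eq_of_isCoatom_of_card_eq_pow {p n : ℕ} [hp : Fact p.Prime]
    (hG : Nat.card G = p ^ n) {M : Subgroup G} (hM : IsCoatom M) : M.index = p := by
  have : Finite G := Nat.finite_of_card_ne_zero (by simp [hG, hp.out.ne_zero])
  obtain ⟨k, hkn, hMk⟩ := (Nat.dvd_prime_pow hp.out).1 (hG ▸ M.card_subgroup_dvd_card)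
  have hk : k < n := by
    refine hkn.lt_of_ne ?_
    rintro rfl
    exact hM.1 ((card_eq_iff_eq_top M).1 (hMk.trans hG.symm))
  obtain ⟨K, hK, hMK⟩ := Sylow.exists_subgroup_card_pow_succ (hG ▸ pow_dvd_pow p hk) hMk
  have hMK' : M < K := hMK.lt_of_ne <| by
    rintro rfl
    exact (Nat.pow_lt_pow_succ hp.out.one_lt).ne (hMk.symm.trans hK)
  have hcard := M.card_mul_index
  rw [← card_top (G := G), ← hM.2 K hMK', hK, hMk, pow_succ] at hcard
  exact Nat.eq_of_mul_eq_mul_left (pow_pos hp.out.pos k) hcard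

theorem Subgroup.card_le_index_mul_card_inf [Finite G] (H K : Subgroup G) :
    Nat.card K ≤ H.index * Nat.card ↥(H ⊓ K) := by
  have hK := K.card_mul_index
  have hHK := (H ⊓ K).card_mul_index
  have hle : (H ⊓ K).index ≤ H.index * K.index := index_inf_le
  have hpos : 0 < K.index := Nat.pos_of_ne_zero index_ne_zero_of_finite
  nlinarith

theorem isCoatom_subgroupOf {R M : Subgroup G}
    (hM : M < R ∧ ∀ K : Subgroup G, M < K → K ≤ R → K = R) : IsCoatom (M.subgroupOf R) := by
  refine ⟨fun h => hM.1.not_ge (subgroupOf_eq_top.1 h), fun K hK => ?_⟩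
  have hMK : M < K.map R.subtype := by
    rw [← map_subgroupOf_eq_of_le hM.1.le]
    exact map_subtype_lt_map_subtype.2 hK
  refine top_unique (map_subtype_le_map_subtype.1 ?_)
  rw [hM.2 _ hMK (map_subtype_le K), ← MonoidHom.range_eq_map, range_subtype]

theorem sq_mem_frattiniOf {R : Subgroup G} {n : ℕ} (hR : Nat.card R = 2 ^ n) {x : G}
    (hx : x ∈ R) : x ^ 2 ∈ frattiniOf R :=
  mem_iInf.2 fun _ => mem_iInf.2 fun hM =>
    sq_mem_of_index_two (index_eq_of_isCoatom_of_card_eq_pow hR (isCoatom_subgroupOf hM))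
      (⟨x, hx⟩ : R)

theorem closure_sq_le_frattiniOf {R : Subgroup G} {n : ℕ} (hR : Nat.card R = 2 ^ n) :
    Subgroup.closure ((· ^ 2) '' (R : Set G)) ≤ frattiniOf R :=
  (closure_le _).2 <| by
    rintro _ ⟨x, hx, rfl⟩
    exact sq_mem_frattiniOf hR hx

theorem map_mem_closure_sq_image (f : G →* G) {R : Subgroup G} (hf : ∀ x ∈ R, f x ∈ R) {y : G}
    (hy : y ∈ Subgroup.closure ((· ^ 2) '' (R : Set G))) :
    f y ∈ Subgroup.closure ((· ^ 2) '' (R : Set G)) :=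
  (closure_le ((Subgroup.closure _).comap f)).2
    (by rintro _ ⟨x, hx, rfl⟩; exact subset_closure ⟨f x, hf x hx, (map_pow f x 2).symm⟩) hy

end Frattini

namespace QuaternionGroup

theorem mem_center_two_iff_sq_eq_one {q : QuaternionGroup 2} :
    q ∈ center (QuaternionGroup 2) ↔ q ^ 2 = 1 := by
  rw [mem_center_iff]
  revert q
  decide

theorem eq_one_or_eq_a_two_of_mem_center {q : QuaternionGroup 2}
    (hq : q ∈ center (QuaternionGroup 2)) : q = 1 ∨ q = a 2 := by
  rw [mem_center_iff] at hq
  revert q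
  decide

theorem card_center_two : Nat.card (center (QuaternionGroup 2)) = 2 := by
  rw [Nat.card_eq_fintype_card]
  decide

theorem inv_mul_mem_center_of_sq_prod {a b c : QuaternionGroup 2}
    (ha : a ∈ center (QuaternionGroup 2)) (h : a ^ 2 * b ^ 2 * c ^ 2 = 1)
    (h' : (a * c) ^ 2 * (b * a) ^ 2 * (c * b) ^ 2 = 1) : b⁻¹ * c ∈ center (QuaternionGroup 2) := by
  rw [mem_center_two_iff_sq_eq_one] at ha ⊢
  revert a b c
  decide

end QuaternionGroup

namespace QQQ

open QuaternionGroup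

/-- The central involution `-1` of `Q₈`. -/
abbrev r : QuaternionGroup 2 := a 2

abbrev e₁ : QQQ := (r, 1, 1)

def weightOne : Finset QQQ := {(r, 1, 1), (1, r, 1), (1, 1, r)}

theorem mem_center_iff_sq_eq_one {x : QQQ} : x ∈ center QQQ ↔ x ^ 2 = 1 := by
  simp only [Subgroup.center_prod, mem_prod, mem_center_two_iff_sq_eq_one, Prod.ext_iff,
    Prod.pow_fst, Prod.pow_snd, Prod.fst_one, Prod.snd_one]

theorem card_center : Nat.card (center QQQ) = 8 := by
  simp only [Subgroup.center_prod, Nat.card_congr (prodEquiv _ _).toEquiv, Nat.card_prod,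
    card_center_two]

theorem center_le_of_e₁_mem {S : Subgroup QQQ} (hS : ∀ s ∈ S, cycQ s ∈ S) (he : e₁ ∈ S) :
    center QQQ ≤ S := by
  have hS₁ : ∀ q ∈ center (QuaternionGroup 2), ((q, 1, 1) : QQQ) ∈ S := by
    intro q hq
    rcases eq_one_or_eq_a_two_of_mem_center hq with rfl | rfl
    exacts [one_mem S, he]
  rintro ⟨z₁, z₂, z₃⟩ hz
  simp only [Subgroup.center_prod, mem_prod] at hz
  have hdecomp : ((z₁, z₂, z₃) : QQQ) =
      (z₁, 1, 1) * cycQ (z₂, 1, 1) * cycQ (cycQ (z₃, 1, 1)) := by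
    ext <;> simp [cycQ]
  rw [hdecomp]
  exact mul_mem (mul_mem (hS₁ _ hz.1) (hS _ (hS₁ _ hz.2.1))) (hS _ (hS _ (hS₁ _ hz.2.2)))

set_option maxRecDepth 10000 in
theorem sq_eq_one_or_eq_of_notMem {x : QQQ} (h : x ^ 2 ∉ weightOne)
    (h' : x ^ 2 * (r, r, r) ∉ weightOne) : x ^ 2 = 1 ∨ x ^ 2 = (r, r, r) := by
  revert x
  decide

set_option maxRecDepth 10000 in
theorem sq_prod_eq_one_of_notMem {x : QQQ} (h : x ^ 2 ∉ weightOne) (h' : x ^ 2 ≠ (r, r, r)) :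
    x.1 ^ 2 * x.2.1 ^ 2 * x.2.2 ^ 2 = 1 := by
  revert x
  decide

def fstCentral : Subgroup QQQ := (center (QuaternionGroup 2)).prod ⊤

theorem card_le_four_mul_card_inf_fstCentral (R : Subgroup QQQ) :
    Nat.card R ≤ 4 * Nat.card ↥(fstCentral ⊓ R) := by
  have hcenter := (center (QuaternionGroup 2)).card_mul_index
  rw [card_center_two, Nat.card_eq_fintype_card, QuaternionGroup.card] at hcenter
  have hindex : fstCentral.index = 4 := by rw [fstCentral, index_prod, index_top]; omega
  exact hindex ▸ card_le_index_mul_card_inf fstCentral R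

theorem card_le_of_forall_sq {R : Subgroup QQQ} (h : ∀ x ∈ R, x ^ 2 = 1 ∨ x ^ 2 = (r, r, r)) :
    Nat.card R ≤ 32 := by
  have hle : fstCentral ⊓ R ≤ center QQQ := by
    rintro x ⟨hxT, hxR⟩
    have hx₁ : x.1 ^ 2 = 1 := mem_center_two_iff_sq_eq_one.1 (mem_prod.1 hxT).1
    refine mem_center_iff_sq_eq_one.2 ((h x hxR).resolve_right fun hx => ?_)
    exact absurd (hx₁.symm.trans (congrArg Prod.fst hx)) (by decide)
  calc Nat.card R ≤ 4 * Nat.card ↥(fstCentral ⊓ R) := card_le_four_mul_card_inf_fstCentral R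
    _ ≤ 4 * 8 := Nat.mul_le_mul_left 4 (card_center ▸ card_le_of_le hle)

def congrModCenter : Subgroup (QuaternionGroup 2 × QuaternionGroup 2) :=
  MonoidHom.eqLocus ((QuotientGroup.mk' (center _)).comp (MonoidHom.fst _ _))
    ((QuotientGroup.mk' (center _)).comp (MonoidHom.snd _ _))

theorem mem_congrModCenter {p : QuaternionGroup 2 × QuaternionGroup 2} :
    p ∈ congrModCenter ↔ p.1⁻¹ * p.2 ∈ center (QuaternionGroup 2) :=
  QuotientGroup.eq

def fstCentralCongr : Subgroup QQQ := (center (QuaternionGroup 2)).prod congrModCenter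

instance : DecidablePred (· ∈ fstCentralCongr) := fun x =>
  decidable_of_iff (x.1 ∈ center _ ∧ x.2.1⁻¹ * x.2.2 ∈ center _)
    (mem_prod.trans (and_congr Iff.rfl mem_congrModCenter)).symm

set_option maxRecDepth 10000 in
theorem card_fstCentralCongr : Nat.card fstCentralCongr = 32 := by
  rw [Nat.card_eq_fintype_card]
  decide

theorem inf_fstCentral_le_fstCentralCongr {R : Subgroup QQQ} (hinv : ∀ x ∈ R, cycQ x ∈ R)
    (heven : ∀ x ∈ R, x.1 ^ 2 * x.2.1 ^ 2 * x.2.2 ^ 2 = 1) : fstCentral ⊓ R ≤ fstCentralCongr := by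
  rintro w ⟨hwT, hwR⟩
  have hw₁ := (mem_prod.1 hwT).1
  exact mem_prod.2 ⟨hw₁, mem_congrModCenter.2 <| inv_mul_mem_center_of_sq_prod hw₁ (heven w hwR)
    (heven _ (mul_mem hwR (hinv w hwR)))⟩

theorem not_forall_sq_prod_eq_one {R : Subgroup QQQ} (hcard : Nat.card R = 2 ^ 7)
    (hinv : ∀ x ∈ R, cycQ x ∈ R) : ¬ ∀ x ∈ R, x.1 ^ 2 * x.2.1 ^ 2 * x.2.2 ^ 2 = 1 := by
  intro heven
  have hR : fstCentral ⊓ R = fstCentralCongr :=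
    eq_of_le_of_card_ge (inf_fstCentral_le_fstCentralCongr hinv heven) <| by
      have := card_le_four_mul_card_inf_fstCentral R
      rw [card_fstCentralCongr]
      omega
  have hle : fstCentralCongr ≤ R := hR ▸ inf_le_right
  have hi : ((1, xa 0, xa 0) : QQQ) ∈ R := hle (by decide)
  have hj : ((1, xa 1, xa 1) : QQQ) ∈ R := hle (by decide)
  exact absurd (heven _ (mul_mem hj (hinv _ hi))) (by decide)

theorem e₁_mem_closure_sq {R : Subgroup QQQ} (hcard : Nat.card R = 2 ^ 7)
    (hinv : ∀ x ∈ R, cycQ x ∈ R) : e₁ ∈ Subgroup.closure ((· ^ 2) '' (R : Set QQQ)) := by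
  set S := Subgroup.closure ((· ^ 2) '' (R : Set QQQ))
  have hsq : ∀ x ∈ R, x ^ 2 ∈ S := fun x hx => subset_closure ⟨x, hx, rfl⟩
  have hS : ∀ s ∈ S, cycQ s ∈ S := fun _ => map_mem_closure_sq_image cycQ.toMonoidHom hinv
  by_contra he
  have hW : ∀ s ∈ S, s ∉ weightOne := by
    intro s hs hw
    simp only [weightOne, Finset.mem_insert, Finset.mem_singleton] at hw
    rcases hw with rfl | rfl | rfl
    exacts [he hs, he (hS _ (hS _ hs)), he (hS _ hs)]
  by_cases hrrr : ∃ y ∈ R, y ^ 2 = (r, r, r)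
  · obtain ⟨y, hy, hy2⟩ := hrrr
    have := card_le_of_forall_sq fun x hx => sq_eq_one_or_eq_of_notMem (hW _ (hsq x hx))
      (hy2 ▸ hW _ (mul_mem (hsq x hx) (hsq y hy)))
    omega
  · push Not at hrrr
    exact not_forall_sq_prod_eq_one hcard hinv fun x hx =>
      sq_prod_eq_one_of_notMem (hW _ (hsq x hx)) (hrrr x hx)

theorem center_le_closure_sq {R : Subgroup QQQ} (hcard : Nat.card R = 2 ^ 7)
    (hinv : ∀ x ∈ R, cycQ x ∈ R) : center QQQ ≤ Subgroup.closure ((· ^ 2) '' (R : Set QQQ)) :=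
  center_le_of_e₁_mem (fun _ => map_mem_closure_sq_image cycQ.toMonoidHom hinv)
    (e₁_mem_closure_sq hcard hinv)

end QQQ

theorem stmt_4_general (R : Subgroup QQQ) (hcard : Nat.card R = 2 ^ 7)
    (hinv : ∀ x ∈ R, cycQ x ∈ R) :
    Subgroup.center QQQ ≤ frattiniOf R :=
  (QQQ.center_le_closure_sq hcard hinv).trans (closure_sq_le_frattiniOf hcard)

theorem stmt_4 (R : Subgroup QQQ) (hcard : Nat.card R = 2 ^ 7)
    (hZ : Subgroup.center QQQ ≤ R) (hinv : ∀ x ∈ R, cycQ x ∈ R) :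
    Subgroup.center QQQ ≤ frattiniOf R :=
  stmt_4_general R hcard hinv
end

section
/- Every elementary abelian subgroup of order 8 of GL(3, 𝔽₃) contains the center of GL(3, 𝔽₃), i.e. contains the scalar matrix −I. -/
/-!
Commuting involutions of a finite-dimensional space `V` over a field of characteristic `≠ 2` are
simultaneously diagonalizable: `V` is the direct sum of the nonzero joint eigenspaces, of which
there are at most `dim V`, and each involution acts on each of them by `±1`. An involution is
determined by these signs, so a family of `2 ^ dim V` distinct ones realises every sign pattern,
in particular the one that is `-1` everywhere, i.e. `-1` itself. For `GL(3, 𝔽₃)` this gives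
`-I ∈ A`, and the center consists of the scalars `±I` because `𝔽₃ˣ = {±1}`.
-/

open Module Polynomial

namespace Module.End

variable {K V : Type*} [Field K] [AddCommGroup V] [Module K V]

section Involution

variable {f : End K V}

theorem isSemisimple_of_mul_self_eq_one (h2 : (2 : K) ≠ 0) (hf : f * f = 1) :
    f.IsSemisimple := by
  refine isSemisimple_of_squarefree_aeval_eq_zero
    (separable_X_pow_sub_C (n := 2) (1 : K) (by exact_mod_cast h2) one_ne_zero).squarefree ?_
  simp [sq, hf]

theorem iSup_eigenspace_eq_top_of_mul_self_eq_one (h2 : (2 : K) ≠ 0) (hf : f * f = 1) :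
    ⨆ μ, f.eigenspace μ = ⊤ := by
  refine eq_top_iff.mpr fun v _ => ?_
  have hv : v = (2⁻¹ : K) • (v + f v) + (2⁻¹ : K) • (v - f v) := by
    rw [← smul_add, add_add_sub_cancel, ← two_smul K v, smul_smul, inv_mul_cancel₀ h2,
      one_smul]
  have hfv : f (f v) = v := by rw [← Module.End.mul_apply, hf, Module.End.one_apply]
  rw [hv]
  refine Submodule.add_mem _ (Submodule.mem_iSup_of_mem 1 ?_) (Submodule.mem_iSup_of_mem (-1) ?_)
  · rw [mem_eigenspace_iff, map_smul, map_add, hfv, one_smul, add_comm]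
  · rw [mem_eigenspace_iff, map_smul, map_sub, hfv, neg_one_smul, ← smul_neg, neg_sub]

theorem maxGenEigenspace_eq_eigenspace_of_mul_self_eq_one (h2 : (2 : K) ≠ 0) (hf : f * f = 1)
    (μ : K) : f.maxGenEigenspace μ = f.eigenspace μ :=
  (isSemisimple_of_mul_self_eq_one h2 hf).isFinitelySemisimple.maxGenEigenspace_eq_eigenspace μ

end Involution

variable {ι : Type*} (f : ι → End K V)

def jointEigenspace (χ : ι → K) : Submodule K V := ⨅ i, (f i).eigenspace (χ i)

variable {f}

theorem apply_eq_smul_of_mem_jointEigenspace {χ : ι → K} {v : V}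
    (hv : v ∈ jointEigenspace f χ) (i : ι) : f i v = χ i • v :=
  mem_eigenspace_iff.mp (Submodule.mem_iInf _ |>.mp hv i)

theorem eq_one_or_eq_neg_one_of_jointEigenspace_ne_bot (hf : ∀ i, f i * f i = 1) {χ : ι → K}
    (hχ : jointEigenspace f χ ≠ ⊥) (i : ι) : χ i = 1 ∨ χ i = -1 := by
  obtain ⟨v, hv, hv0⟩ := Submodule.exists_mem_ne_zero_of_ne_bot hχ
  have : (χ i * χ i) • v = (1 : K) • v := by
    rw [mul_smul, ← apply_eq_smul_of_mem_jointEigenspace hv, ← map_smul,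
      ← apply_eq_smul_of_mem_jointEigenspace hv, ← Module.End.mul_apply, hf, one_smul,
      Module.End.one_apply]
  exact mul_self_eq_one_iff.mp (smul_left_injective K hv0 this)

theorem maxGenEigenspace_eq_jointEigenspace (h2 : (2 : K) ≠ 0) (hf : ∀ i, f i * f i = 1)
    (χ : ι → K) : ⨅ i, (f i).maxGenEigenspace (χ i) = jointEigenspace f χ := by
  simp only [jointEigenspace, maxGenEigenspace_eq_eigenspace_of_mul_self_eq_one h2 (hf _)]

theorem iSupIndep_jointEigenspace (h2 : (2 : K) ≠ 0) (hf : ∀ i, f i * f i = 1)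
    (hcomm : ∀ i j, Commute (f i) (f j)) : iSupIndep (jointEigenspace f) := by
  rw [← funext (maxGenEigenspace_eq_jointEigenspace h2 hf)]
  exact independent_iInf_maxGenEigenspace_of_forall_mapsTo f
    fun i j φ => mapsTo_maxGenEigenspace_of_comm (hcomm j i) φ

variable [FiniteDimensional K V]

theorem iSup_jointEigenspace_eq_top (h2 : (2 : K) ≠ 0) (hf : ∀ i, f i * f i = 1)
    (hcomm : ∀ i j, Commute (f i) (f j)) : ⨆ χ, jointEigenspace f χ = ⊤ := by
  rw [← funext (maxGenEigenspace_eq_jointEigenspace h2 hf)]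
  refine iSup_iInf_maxGenEigenspace_eq_top_of_forall_mapsTo f
    (fun i j φ => mapsTo_maxGenEigenspace_of_comm (hcomm j i) φ) fun i => ?_
  simp only [maxGenEigenspace_eq_eigenspace_of_mul_self_eq_one h2 (hf i)]
  exact iSup_eigenspace_eq_top_of_mul_self_eq_one h2 (hf i)

theorem eq_of_eqOn_jointEigenspace (h2 : (2 : K) ≠ 0) (hf : ∀ i, f i * f i = 1)
    (hcomm : ∀ i j, Commute (f i) (f j)) {g h : End K V}
    (H : ∀ χ, jointEigenspace f χ ≠ ⊥ → ∀ v ∈ jointEigenspace f χ, g v = h v) :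
    g = h := by
  suffices LinearMap.ker (g - h) = ⊤ from sub_eq_zero.mp (LinearMap.ker_eq_top.mp this)
  refine top_le_iff.mp <|
    (iSup_jointEigenspace_eq_top h2 hf hcomm).ge.trans (iSup_le fun χ v hv => ?_)
  rcases eq_or_ne (jointEigenspace f χ) ⊥ with hχ | hχ
  · simp [(Submodule.mem_bot K).mp (hχ ▸ hv)]
  · simp [H χ hχ v hv]

theorem injective_eigenvalue_eq_neg_one (h2 : (2 : K) ≠ 0) (hf : ∀ i, f i * f i = 1)
    (hcomm : ∀ i j, Commute (f i) (f j)) (hinj : Function.Injective f) :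
    Function.Injective fun i (χ : {χ // jointEigenspace f χ ≠ ⊥}) => χ.1 i = -1 := by
  intro i j hij
  refine hinj (eq_of_eqOn_jointEigenspace h2 hf hcomm fun χ hχ v hv => ?_)
  have hχij : χ i = χ j := by
    have hiff : χ i = -1 ↔ χ j = -1 := eq_iff_iff.mp (congrFun hij ⟨χ, hχ⟩)
    have := eq_one_or_eq_neg_one_of_jointEigenspace_ne_bot hf hχ i
    have := eq_one_or_eq_neg_one_of_jointEigenspace_ne_bot hf hχ j
    grind
  rw [apply_eq_smul_of_mem_jointEigenspace hv, apply_eq_smul_of_mem_jointEigenspace hv, hχij]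

theorem finite_jointEigenspace_ne_bot (h2 : (2 : K) ≠ 0) (hf : ∀ i, f i * f i = 1)
    (hcomm : ∀ i j, Commute (f i) (f j)) : Finite {χ // jointEigenspace f χ ≠ ⊥} :=
  let := (iSupIndep_jointEigenspace h2 hf hcomm).fintypeNeBotOfFiniteDimensional
  inferInstance

theorem nat_card_jointEigenspace_ne_bot_le_finrank (h2 : (2 : K) ≠ 0) (hf : ∀ i, f i * f i = 1)
    (hcomm : ∀ i j, Commute (f i) (f j)) :
    Nat.card {χ // jointEigenspace f χ ≠ ⊥} ≤ finrank K V := by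
  have hind := iSupIndep_jointEigenspace h2 hf hcomm
  let := hind.fintypeNeBotOfFiniteDimensional
  rw [Nat.card_eq_fintype_card]
  exact hind.subtype_ne_bot_le_finrank

theorem exists_eq_neg_one_of_nat_card_eq (h2 : (2 : K) ≠ 0) (hf : ∀ i, f i * f i = 1)
    (hcomm : ∀ i j, Commute (f i) (f j)) (hinj : Function.Injective f)
    (hcard : Nat.card ι = 2 ^ finrank K V) : ∃ i, f i = -1 := by
  have := finite_jointEigenspace_ne_bot h2 hf hcomm
  have hle : Nat.card ({χ // jointEigenspace f χ ≠ ⊥} → Prop) ≤ Nat.card ι := by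
    rw [hcard, Nat.card_fun, Nat.card_eq_fintype_card (α := Prop), Fintype.card_prop]
    exact Nat.pow_le_pow_right two_pos (nat_card_jointEigenspace_ne_bot_le_finrank h2 hf hcomm)
  have hsurj :=
    ((injective_eigenvalue_eq_neg_one h2 hf hcomm hinj).bijective_of_nat_card_le hle).surjective
  obtain ⟨i, hi⟩ := hsurj fun _ => True
  refine ⟨i, eq_of_eqOn_jointEigenspace h2 hf hcomm fun χ hχ v hv => ?_⟩
  have hχi : χ i = -1 := of_eq_true (congrFun hi ⟨χ, hχ⟩)
  rw [apply_eq_smul_of_mem_jointEigenspace hv, hχi, neg_one_smul, LinearMap.neg_apply,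
    Module.End.one_apply]

end Module.End

theorem Matrix.GeneralLinearGroup.center_le_of_neg_one_mem {n R : Type*} [Fintype n] [DecidableEq n]
    [CommRing R] (hR : ∀ r : Rˣ, r = 1 ∨ r = -1) {A : Subgroup (GL n R)} (hA : -1 ∈ A) :
    Subgroup.center (GL n R) ≤ A := by
  rw [GeneralLinearGroup.center_eq_range_scalar]
  rintro _ ⟨r, rfl⟩
  rcases hR r with rfl | rfl
  · simp
  · convert hA using 1
    ext : 1
    simp [← Matrix.diagonal_neg]

open Module.End in
theorem stmt_7 (A : Subgroup (GL (Fin 3) (ZMod 3))) (hcard : Nat.card A = 8)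
    (hexp : ∀ x ∈ A, x ^ 2 = 1) (hab : ∀ x ∈ A, ∀ y ∈ A, x * y = y * x) :
    Subgroup.center (GL (Fin 3) (ZMod 3)) ≤ A ∧
    ∃ u : GL (Fin 3) (ZMod 3), u ∈ A ∧ (↑u : Matrix (Fin 3) (Fin 3) (ZMod 3)) = -1 := by
  let f : A → End (ZMod 3) (Fin 3 → ZMod 3) := fun x => Matrix.toLinAlgEquiv' x.1.1
  have hf (x : A) : f x * f x = 1 := by
    rw [← map_mul, ← Units.val_mul, ← sq, hexp x x.2, Units.val_one, map_one]
  have hcomm (x y : A) : Commute (f x) (f y) :=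
    (Commute.map (hab x x.2 y y.2) (Units.coeHom _)).map _
  have hinj : Function.Injective f := fun x y h =>
    Subtype.ext (Units.ext (Matrix.toLinAlgEquiv'.injective h))
  obtain ⟨u, hu⟩ := exists_eq_neg_one_of_nat_card_eq (by decide) hf hcomm hinj
    (by rw [hcard, Module.finrank_fin_fun]; rfl)
  have hu' : (u.1 : Matrix (Fin 3) (Fin 3) (ZMod 3)) = -1 :=
    Matrix.toLinAlgEquiv'.injective (hu.trans (by rw [map_neg, map_one]))
  refine ⟨Matrix.GeneralLinearGroup.center_le_of_neg_one_mem (by decide) ?_, u, u.2, hu'⟩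
  exact (Units.ext hu' : u.1 = -1) ▸ u.2
end

section
/- The regular wreath product C₃ ≀ C₃ (of order 81) contains a unique elementary abelian subgroup of order 27, namely its base group C₃ × C₃ × C₃. -/
/-- The cyclic group of order 3, written multiplicatively. -/
abbrev C3 : Type := Multiplicative (ZMod 3)

/-- The shift automorphism of the base group `C₃ × C₃ × C₃` (indexed by `ZMod 3`). -/
def shiftEquiv (k : ZMod 3) : (ZMod 3 → C3) ≃* (ZMod 3 → C3) where
  toFun f i := f (i + k)
  invFun f i := f (i - k)
  left_inv f := funext fun i => by simp
  right_inv f := funext fun i => by simp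
  map_mul' f g := rfl

/-- The action of the top group `C₃` on the base group by shifting coordinates. -/
def shiftHom : C3 →* MulAut (ZMod 3 → C3) where
  toFun k := shiftEquiv k.toAdd
  map_one' := by
    ext f i
    simp [shiftEquiv]
  map_mul' a b := by
    ext f i
    simp [shiftEquiv, add_assoc]

/-- The regular wreath product `C₃ ≀ C₃`, of order 81. -/
abbrev WreathC3 : Type := (ZMod 3 → C3) ⋊[shiftHom] C3


/-!
Let `x` lie outside the base group. A base element commutes with `x` exactly when its
coordinates are invariant under the nontrivial cyclic shift by `x.right`, i.e. when it is
constant; hence the centralizer of `x` has order at most `3 * 3 = 9`. An abelian subgroup of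
order 27 lies in the centralizer of each of its elements, so it contains nothing outside the
base group, and it equals the base group by counting.
-/

namespace SemidirectProduct

section Group

variable {N G : Type*} [Group N] [Group G] {φ : G →* MulAut N}

instance [Finite N] [Finite G] : Finite (N ⋊[φ] G) :=
  Finite.of_equiv _ equivProd.symm

theorem mem_range_inl_iff {x : N ⋊[φ] G} : x ∈ (inl : N →* N ⋊[φ] G).range ↔ x.right = 1 := by
  rw [range_inl_eq_ker_rightHom, MonoidHom.mem_ker, rightHom_eq_right]

theorem card_range_inl : Nat.card (inl : N →* N ⋊[φ] G).range = Nat.card N :=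
  Nat.card_congr (MonoidHom.ofInjective inl_injective).toEquiv.symm

end Group

section CommGroup

variable {N G : Type*} [CommGroup N] [Group G] {φ : G →* MulAut N}

theorem inl_mem_centralizer_singleton_iff {x : N ⋊[φ] G} {n : N} :
    inl n ∈ Subgroup.centralizer {x} ↔ φ x.right n = n := by
  rw [Subgroup.mem_centralizer_singleton_iff, SemidirectProduct.ext_iff]
  simp [mul_comm n x.left, eq_comm]

theorem card_centralizer_le [Finite N] [Finite G] (x : N ⋊[φ] G) :
    Nat.card (Subgroup.centralizer {x}) ≤ Nat.card {n : N // φ x.right n = n} * Nat.card G := by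
  set f := rightHom.comp (Subgroup.centralizer {x}).subtype
  have hker : Nat.card f.ker ≤ Nat.card {n : N // φ x.right n = n} := by
    have hinl (g : f.ker) : (inl (g.1 : N ⋊[φ] G).left : N ⋊[φ] G) = g.1 := by
      ext
      · rfl
      · exact g.2.symm
    refine Nat.card_le_card_of_injective
      (fun g ↦ ⟨(g.1 : N ⋊[φ] G).left, inl_mem_centralizer_singleton_iff.mp ?_⟩) fun g h hgh ↦ ?_
    · exact hinl g ▸ g.1.2
    · rw [Subtype.ext_iff, Subtype.ext_iff, ← hinl g, ← hinl h]
      exact congrArg inl (congrArg Subtype.val hgh)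
  calc Nat.card (Subgroup.centralizer {x})
      = Nat.card f.ker * Nat.card f.range := by rw [← Subgroup.index_ker, Subgroup.card_mul_index]
    _ ≤ Nat.card {n : N // φ x.right n = n} * Nat.card G :=
      Nat.mul_le_mul hker (Subgroup.card_le_card_group _)

end CommGroup

end SemidirectProduct

theorem ZMod.eq_apply_zero_of_periodic {p : ℕ} [Fact p.Prime] {α : Type*} {c : ZMod p → α}
    {k : ZMod p} (hc : Function.Periodic c k) (hk : k ≠ 0) (i : ZMod p) : c i = c 0 := by
  have : i = ((i * k⁻¹).val : ZMod p) * k := by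
    rw [ZMod.natCast_zmod_val, inv_mul_cancel_right₀ hk]
  rw [this, hc.nat_mul_eq]

namespace C3

theorem card_eq : Nat.card C3 = 3 := by
  simp [Nat.card_eq_fintype_card]

theorem pow_three_eq_one (a : C3) : a ^ 3 = 1 := by
  simpa [card_eq] using pow_card_eq_one' (x := a)

end C3

theorem card_fixed_shiftHom_le {k : C3} (hk : k ≠ 1) :
    Nat.card {f : ZMod 3 → C3 // shiftHom k f = f} ≤ 3 := by
  have hk' : k.toAdd ≠ 0 := by simpa using hk
  have hperiodic (f : {f : ZMod 3 → C3 // shiftHom k f = f}) : Function.Periodic f.1 k.toAdd :=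
    fun i ↦ congrFun f.2 i
  refine (Nat.card_le_card_of_injective (fun f ↦ f.1 0) fun f g hfg ↦
    Subtype.ext (funext fun i ↦ ?_)).trans_eq C3.card_eq
  rw [ZMod.eq_apply_zero_of_periodic (hperiodic f) hk',
    ZMod.eq_apply_zero_of_periodic (hperiodic g) hk']
  exact hfg

namespace WreathC3

theorem card_centralizer_le_nine {x : WreathC3} (hx : x.right ≠ 1) :
    Nat.card (Subgroup.centralizer {x}) ≤ 9 :=
  calc Nat.card (Subgroup.centralizer {x})
      ≤ Nat.card {f : ZMod 3 → C3 // shiftHom x.right f = f} * Nat.card C3 :=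
        SemidirectProduct.card_centralizer_le x
    _ ≤ 3 * 3 := Nat.mul_le_mul (card_fixed_shiftHom_le hx) C3.card_eq.le

theorem le_range_inl_of_commute {A : Subgroup WreathC3} (hA : 9 < Nat.card A)
    (hcomm : ∀ x ∈ A, ∀ y ∈ A, x * y = y * x) :
    A ≤ (SemidirectProduct.inl : (ZMod 3 → C3) →* WreathC3).range := by
  intro x hx
  rw [SemidirectProduct.mem_range_inl_iff]
  by_contra hx'
  have hle : A ≤ Subgroup.centralizer {x} := fun y hy ↦
    Subgroup.mem_centralizer_singleton_iff.mpr (hcomm y hy x hx)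
  exact absurd ((Subgroup.card_le_of_le hle).trans (card_centralizer_le_nine hx')) hA.not_ge

theorem card_range_inl :
    Nat.card (SemidirectProduct.inl : (ZMod 3 → C3) →* WreathC3).range = 27 := by
  rw [SemidirectProduct.card_range_inl, Nat.card_fun, C3.card_eq, Nat.card_zmod]
  norm_num

end WreathC3

theorem stmt_11 :
    (Nat.card ((SemidirectProduct.inl : (ZMod 3 → C3) →* WreathC3).range) = 27 ∧
      (∀ x ∈ (SemidirectProduct.inl : (ZMod 3 → C3) →* WreathC3).range,
        ∀ y ∈ (SemidirectProduct.inl : (ZMod 3 → C3) →* WreathC3).range, x * y = y * x) ∧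
      (∀ x ∈ (SemidirectProduct.inl : (ZMod 3 → C3) →* WreathC3).range, x ^ 3 = 1)) ∧
    ∀ A : Subgroup WreathC3, Nat.card A = 27 →
      (∀ x ∈ A, ∀ y ∈ A, x * y = y * x) → (∀ x ∈ A, x ^ 3 = 1) →
        A = (SemidirectProduct.inl : (ZMod 3 → C3) →* WreathC3).range := by
  refine ⟨⟨WreathC3.card_range_inl, ?_, ?_⟩, fun A hA hcomm _ ↦ ?_⟩
  · rintro _ ⟨f, rfl⟩ _ ⟨g, rfl⟩
    rw [← map_mul, mul_comm, map_mul]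
  · rintro _ ⟨f, rfl⟩
    rw [← map_pow, show f ^ 3 = 1 from funext fun i ↦ C3.pow_three_eq_one (f i), map_one]
  · have hle := WreathC3.le_range_inl_of_commute (by rw [hA]; norm_num) hcomm
    exact Subgroup.eq_of_le_of_card_ge hle (by rw [hA, WreathC3.card_range_inl])
end

section
/- Let Q be an extraspecial group of order 3⁷ and exponent 3 with center Z, and suppose a group of order 2 acts on Q with r acting such that C_Q(r) is extraspecial of order 3⁵. Then [Q, r] is extraspecial of order 3³, Q = C_Q(r)·[Q,r], and [C_Q(r), [Q,r]] ≤ Z. -/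
/-- The subgroup `Q` of `G` is extraspecial for the prime `p`, with center `Z`:
`Z(Q) = Q' = Φ(Q) = Z` has order `p`. -/
def IsExtraspecialSub {G : Type*} [Group G] (p : ℕ) (Q Z : Subgroup G) : Prop :=
  Z ≤ Q ∧ Nat.card Z = p ∧ Q ⊓ Subgroup.centralizer (Q : Set G) = Z ∧
    ⁅Q, Q⁆ = Z ∧ frattiniOf Q = Z

/-- The fixed-point subgroup `C_Q(r)` of an automorphism `r` of `Q`. -/
def fixedSub {Q : Type*} [Group Q] (r : MulAut Q) : Subgroup Q where
  carrier := {q | r q = q}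
  one_mem' := map_one r
  mul_mem' := fun {a b} ha hb => by
    simp only [Set.mem_setOf_eq] at *
    rw [map_mul, ha, hb]
  inv_mem' := fun {a} ha => by
    simp only [Set.mem_setOf_eq] at *
    rw [map_inv, ha]

/-- The commutator subgroup `[Q, r]` of `Q` with an automorphism `r`. -/
def commSub {Q : Type*} [Group Q] (r : MulAut Q) : Subgroup Q :=
  Subgroup.closure (Set.range fun q : Q => q⁻¹ * r q)

open Subgroup
open scoped commutatorElement

section GroupFacts

variable {G : Type*} [Group G]

theorem eq_one_of_inv_eq_of_pow_three {k : G} (h3 : k ^ 3 = 1) (h : k⁻¹ = k) : k = 1 := by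
  have h2 : k ^ 2 = 1 := by rw [sq]; nth_rewrite 1 [← h]; exact inv_mul_cancel k
  simpa using (pow_gcd_eq_one (m := 3) (n := 2)).mpr ⟨h3, h2⟩

theorem commutatorElement_inv_right_of_mem_center {a b : G} (h : ⁅b, a⁆ ∈ center G) :
    ⁅a, b⁻¹⁆ = ⁅a, b⁆⁻¹ := by
  rw [commutatorElement_inv_right, mem_center_iff.mp h b⁻¹, inv_mul_cancel_right,
    commutatorElement_inv]

theorem commutatorElement_mul_mul_of_mem_center {a b z w : G} (hz : z ∈ center G)
    (hw : w ∈ center G) : ⁅a * z, b * w⁆ = ⁅a, b⁆ := by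
  have hzc : ⁅z, b * w⁆ = 1 :=
    commutatorElement_eq_one_iff_mul_comm.mpr (mem_center_iff.mp hz _).symm
  have hwc : ⁅a, w⁆ = 1 := commutatorElement_eq_one_iff_mul_comm.mpr (mem_center_iff.mp hw a)
  rw [commutatorElement_mul_left_eq_conj_mul, hzc, mul_one, mul_inv_cancel, one_mul,
    commutatorElement_mul_right_eq_mul_conj, hwc, mul_one, mul_inv_cancel_right]

theorem Subgroup.eq_of_le_of_ne_bot {H K : Subgroup G} (hK : (Nat.card K).Prime) (hle : H ≤ K)
    (hH : H ≠ ⊥) : H = K := by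
  have : Finite K := Nat.finite_of_card_ne_zero hK.ne_zero
  rcases (Nat.dvd_prime hK).mp (card_dvd_of_le hle) with h1 | hK'
  · exact absurd (eq_bot_of_card_eq H h1) hH
  · exact eq_of_le_of_card_ge hle hK'.ge

theorem Subgroup.card_mul_card_inf_of_sup_eq_top {C R : Subgroup G} [R.Normal] (h : C ⊔ R = ⊤) :
    Nat.card G * Nat.card (C ⊓ R : Subgroup G) = Nat.card C * Nat.card R := by
  have hindex : R.relIndex C = R.index := by
    rw [← relIndex_sup_left, sup_comm, h, relIndex_top_right]
  have hC := relIndex_mul_relIndex ⊥ (R ⊓ C) C bot_le inf_le_right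
  rw [relIndex_bot_left, relIndex_bot_left, inf_relIndex_right, hindex, inf_comm] at hC
  rw [← card_mul_index R, ← hC]
  ring

theorem Subgroup.le_center_of_le_centralizer {C R K : Subgroup G} (hCR : C ⊔ R = ⊤)
    (hC : K ≤ centralizer C) (hR : K ≤ centralizer R) : K ≤ center G := by
  rw [le_centralizer_iff] at hC hR
  have : centralizer (K : Set G) = ⊤ := top_le_iff.mp (hCR ▸ sup_le hC hR)
  rwa [centralizer_eq_top_iff_subset] at this

end GroupFacts

section Frattini

variable {G : Type*} [Group G]

def IsMaximalIn (M R : Subgroup G) : Prop :=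
  M < R ∧ ∀ K : Subgroup G, M < K → K ≤ R → K = R

theorem frattiniOf_le_of_isMaximalIn {M R : Subgroup G} (hM : IsMaximalIn M R) :
    frattiniOf R ≤ M :=
  biInf_le _ hM

theorem le_frattiniOf {H R : Subgroup G} (h : ∀ M, IsMaximalIn M R → H ≤ M) : H ≤ frattiniOf R :=
  le_iInf₂ h

theorem isMaximalIn_of_relIndex_prime {M R : Subgroup G} (hMR : M ≤ R)
    (hp : (M.relIndex R).Prime) : IsMaximalIn M R := by
  refine ⟨lt_of_le_of_ne hMR fun h => ?_, fun K hMK hKR => ?_⟩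
  · rw [h, relIndex_self] at hp
    exact Nat.not_prime_one hp
  · rw [← relIndex_mul_relIndex M K R hMK.le hKR, Nat.prime_mul_iff, relIndex_eq_one,
      relIndex_eq_one] at hp
    rcases hp with ⟨-, hRK⟩ | ⟨-, hKM⟩
    · exact le_antisymm hKR hRK
    · exact absurd hKM (not_le_of_gt hMK)

theorem Subgroup.relIndex_eq_prime_of_lt_of_lt {p : ℕ} (hp : p.Prime) {Z M R : Subgroup G}
    (hZR : Z.relIndex R = p ^ 2) (hZM : Z < M) (hMR : M < R) : M.relIndex R = p := by
  have h := relIndex_mul_relIndex Z M R hZM.le hMR.le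
  have hZM' : Z.relIndex M ≠ 1 := mt relIndex_eq_one.mp (not_le_of_gt hZM)
  have hMR' : M.relIndex R ≠ 1 := mt relIndex_eq_one.mp (not_le_of_gt hMR)
  rw [hZR] at h
  obtain ⟨k, hk, hkM⟩ := (Nat.dvd_prime_pow hp).mp (Dvd.intro_left _ h)
  interval_cases k
  · exact absurd (by simpa using hkM) hMR'
  · simpa using hkM
  · rw [hkM, Nat.mul_eq_right (pow_pos hp.pos 2).ne'] at h
    exact absurd h hZM'

theorem Subgroup.commutator_sup_center_le (M : Subgroup G) : ⁅M ⊔ center G, M ⊔ center G⁆ ≤ M := by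
  rw [commutator_le]
  intro g₁ hg₁ g₂ hg₂
  obtain ⟨m₁, hm₁, z₁, hz₁, rfl⟩ := mem_sup_of_normal_right.mp hg₁
  obtain ⟨m₂, hm₂, z₂, hz₂, rfl⟩ := mem_sup_of_normal_right.mp hg₂
  rw [commutatorElement_mul_mul_of_mem_center hz₁ hz₂, commutatorElement_def]
  exact mul_mem (mul_mem (mul_mem hm₁ hm₂) (inv_mem hm₁)) (inv_mem hm₂)

theorem center_le_of_isMaximalIn {M R : Subgroup G} (hM : IsMaximalIn M R) (hZR : center G ≤ R)
    (hRR : center G ≤ ⁅R, R⁆) : center G ≤ M := by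
  by_contra hZM
  have hsup := hM.2 _ (left_lt_sup.mpr hZM) (sup_le hM.1.le hZR)
  exact hZM (hRR.trans (hsup ▸ commutator_sup_center_le M))

theorem Subgroup.zpowers_sup_center_le_centralizer (x : G) :
    zpowers x ⊔ center G ≤ centralizer {x} :=
  sup_le (zpowers_le.mpr (mem_centralizer_singleton_iff.mpr rfl)) (center_le_centralizer _)

theorem Subgroup.notMem_zpowers_sup_center {x y : G} (hxy : ⁅x, y⁆ ≠ 1) :
    y ∉ zpowers x ⊔ center G := fun hy => hxy <| commutatorElement_eq_one_iff_mul_comm.mpr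
  (mem_centralizer_singleton_iff.mp (zpowers_sup_center_le_centralizer x hy)).symm

theorem isMaximalIn_zpowers_sup_center {p : ℕ} (hp : p.Prime) {R : Subgroup G}
    (hindex : (center G).relIndex R = p ^ 2) (hZR : center G ≤ R) {x y : G} (hx : x ∈ R)
    (hy : y ∈ R) (hxy : ⁅x, y⁆ ≠ 1) : IsMaximalIn (zpowers x ⊔ center G) R := by
  have hxZ : x ∉ center G := fun h =>
    hxy (commutatorElement_eq_one_iff_mul_comm.mpr (mem_center_iff.mp h y).symm)
  have hMR : zpowers x ⊔ center G ≤ R := sup_le (zpowers_le.mpr hx) hZR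
  have hZM : center G < zpowers x ⊔ center G := right_lt_sup.mpr fun h => hxZ (h (mem_zpowers x))
  have hMR' : zpowers x ⊔ center G < R :=
    SetLike.lt_iff_le_and_exists.mpr ⟨hMR, y, hy, notMem_zpowers_sup_center hxy⟩
  exact isMaximalIn_of_relIndex_prime hMR (relIndex_eq_prime_of_lt_of_lt hp hindex hZM hMR' ▸ hp)

theorem frattiniOf_eq_center_of_card {p : ℕ} (hp : p.Prime) {R : Subgroup G}
    (hR : Nat.card R = p ^ 3) (hZ : Nat.card (center G) = p) (hRR : ⁅R, R⁆ = center G)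
    (hcent : R ⊓ centralizer R = center G) : frattiniOf R = center G := by
  have hZR : center G ≤ R := hcent.ge.trans inf_le_left
  have hindex : (center G).relIndex R = p ^ 2 := by
    have h := relIndex_mul_relIndex ⊥ (center G) R bot_le hZR
    rw [relIndex_bot_left, relIndex_bot_left, hZ, hR, pow_succ'] at h
    exact Nat.eq_of_mul_eq_mul_left hp.pos h
  refine le_antisymm ?_ (le_frattiniOf fun M hM => center_le_of_isMaximalIn hM hZR hRR.ge)
  obtain ⟨x, hx, y, hy, hxy⟩ : ∃ x ∈ R, ∃ y ∈ R, ⁅x, y⁆ ≠ 1 := by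
    by_contra! h
    have hbot : ⁅R, R⁆ = ⊥ := commutator_eq_bot_iff_le_centralizer.mpr fun x hx y hy =>
      commutatorElement_eq_one_iff_mul_comm.mp (h y hy x hx)
    rw [hRR, eq_bot_iff_card, hZ] at hbot
    exact hp.one_lt.ne' hbot
  have hMx := isMaximalIn_zpowers_sup_center hp hindex hZR hx hy hxy
  have hMy := isMaximalIn_zpowers_sup_center hp hindex hZR hy hx
    (by rwa [← commutatorElement_inv, inv_ne_one])
  have hgen : zpowers x ⊔ center G ⊔ zpowers y = R := hMx.2 _
    (left_lt_sup.mpr fun h => notMem_zpowers_sup_center hxy (h (mem_zpowers y)))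
    (sup_le hMx.1.le (zpowers_le.mpr hy))
  intro g hg
  have hgx := zpowers_sup_center_le_centralizer x (frattiniOf_le_of_isMaximalIn hMx hg)
  have hgy := zpowers_sup_center_le_centralizer y (frattiniOf_le_of_isMaximalIn hMy hg)
  rw [mem_centralizer_singleton_iff] at hgx hgy
  have hRg : R ≤ centralizer {g} := hgen ▸ sup_le (sup_le
    (zpowers_le.mpr (mem_centralizer_singleton_iff.mpr hgx.symm)) (center_le_centralizer _))
    (zpowers_le.mpr (mem_centralizer_singleton_iff.mpr hgy.symm))
  rw [← hcent]
  exact ⟨hMx.1.le (frattiniOf_le_of_isMaximalIn hMx hg), fun h hh =>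
    mem_centralizer_singleton_iff.mp (hRg hh)⟩

end Frattini

section Involution

variable {Q : Type*} [Group Q] {r : MulAut Q}

theorem apply_inv_mul_apply_of_involutive (hr : Function.Involutive r) (q : Q) :
    r (q⁻¹ * r q) = (q⁻¹ * r q)⁻¹ := by
  rw [map_mul, map_inv, hr q, mul_inv_rev, inv_inv]

theorem mem_fixedSub_of_apply_inv_mul_apply (hr : Function.Involutive r)
    (hexp : ∀ q : Q, q ^ 3 = 1) {x : Q} (h : r (x⁻¹ * r x) = x⁻¹ * r x) : x ∈ fixedSub r := by
  have hw := eq_one_of_inv_eq_of_pow_three (hexp _)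
    ((apply_inv_mul_apply_of_involutive hr x).symm.trans h)
  exact (inv_mul_eq_one.mp hw).symm

theorem apply_mul_self_mem_fixedSub (hr : Function.Involutive r)
    (hcent : ∀ a b : Q, ⁅a, b⁆ ∈ center Q) (hrZ : ∀ z ∈ center Q, r z = z)
    (hexp : ∀ q : Q, q ^ 3 = 1) (q : Q) : r q * q ∈ fixedSub r := by
  apply mem_fixedSub_of_apply_inv_mul_apply hr hexp
  have hw : (r q * q)⁻¹ * r (r q * q) = ⁅q⁻¹, (r q)⁻¹⁆ := by
    rw [map_mul, hr q, commutatorElement_def]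
    group
  rw [hw]
  exact hrZ _ (hcent _ _)

theorem fixedSub_sup_commSub (hr : Function.Involutive r)
    (hcent : ∀ a b : Q, ⁅a, b⁆ ∈ center Q) (hrZ : ∀ z ∈ center Q, r z = z)
    (hexp : ∀ q : Q, q ^ 3 = 1) : fixedSub r ⊔ commSub r = ⊤ := by
  refine eq_top_iff.mpr fun q _ => ?_
  have hdecomp : q = (r q * q)⁻¹ * (r q * q⁻¹) :=
    calc q = q ^ 3 * (q⁻¹ * q⁻¹) := by group
      _ = (r q * q)⁻¹ * (r q * q⁻¹) := by rw [hexp]; group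
  have hgen : r q * q⁻¹ ∈ commSub r := by
    have : q * (r q)⁻¹ ∈ commSub r := subset_closure ⟨q⁻¹, by simp⟩
    simpa using inv_mem this
  rw [hdecomp]
  exact mul_mem_sup (inv_mem (apply_mul_self_mem_fixedSub hr hcent hrZ hexp q)) hgen

theorem commSub_le_centralizer_fixedSub (hr : Function.Involutive r)
    (hcent : ∀ a b : Q, ⁅a, b⁆ ∈ center Q) (hrZ : ∀ z ∈ center Q, r z = z)
    (hexp : ∀ q : Q, q ^ 3 = 1) : commSub r ≤ centralizer (fixedSub r) := by
  rw [commSub, closure_le]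
  rintro _ ⟨q, rfl⟩ c hc
  have hinv : r ⁅c, q⁻¹ * r q⁆ = ⁅c, q⁻¹ * r q⁆⁻¹ := by
    rw [map_commutatorElement, show r c = c from hc, apply_inv_mul_apply_of_involutive hr,
      commutatorElement_inv_right_of_mem_center (hcent _ _)]
  have hk := eq_one_of_inv_eq_of_pow_three (hexp _) (hinv.symm.trans (hrZ _ (hcent _ _)))
  exact commutatorElement_eq_one_iff_mul_comm.mp hk

end Involution

theorem stmt_18_general {Q : Type*} [Group Q]
    (hcard : Nat.card Q = 3 ^ 7)
    (hZ : Nat.card (Subgroup.center Q) = 3)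
    (hcomm : commutator Q = Subgroup.center Q)
    (hexp : ∀ q : Q, q ^ 3 = 1)
    (r : MulAut Q) (hr : orderOf r = 2)
    (hrZ : ∀ z ∈ Subgroup.center Q, r z = z)
    (hfixE : IsExtraspecialSub 3 (fixedSub r) (Subgroup.center Q))
    (hfixC : Nat.card (fixedSub r) = 3 ^ 5) :
    IsExtraspecialSub 3 (commSub r) (Subgroup.center Q) ∧
    Nat.card (commSub r) = 3 ^ 3 ∧
    fixedSub r ⊔ commSub r = ⊤ ∧
    ⁅fixedSub r, commSub r⁆ ≤ Subgroup.center Q := by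
  obtain ⟨hZC, -, hCcent, -, -⟩ := hfixE
  have hinvol : Function.Involutive r := fun q => by
    rw [← MulAut.mul_apply, ← sq, ← hr, pow_orderOf_eq_one, MulAut.one_apply]
  have hcent (a b : Q) : ⁅a, b⁆ ∈ center Q :=
    hcomm ▸ commutator_mem_commutator (mem_top a) (mem_top b)
  set C := fixedSub r
  set R := commSub r
  have hsup : C ⊔ R = ⊤ := fixedSub_sup_commSub hinvol hcent hrZ hexp
  have hRC : R ≤ centralizer C := commSub_le_centralizer_fixedSub hinvol hcent hrZ hexp
  have : R.Normal := normalizer_eq_top_iff.mp <| top_le_iff.mp <| hsup ▸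
    sup_le ((le_centralizer_iff.mp hRC).trans (centralizer_le_normalizer _)) le_normalizer
  have hRR : ⁅R, R⁆ = center Q := by
    refine eq_of_le_of_ne_bot (hZ ▸ Nat.prime_three)
      ((commutator_mono le_top le_top).trans hcomm.le) fun hbot => ?_
    have hCtop : C = ⊤ := by
      rw [← hsup, sup_eq_left.mpr ((le_center_of_le_centralizer hsup hRC
        (commutator_eq_bot_iff_le_centralizer.mp hbot)).trans hZC)]
    rw [hCtop, card_top, hcard] at hfixC
    norm_num at hfixC
  have hZR : center Q ≤ R := hRR ▸ commutator_le_left R R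
  have hinf : C ⊓ R = center Q :=
    le_antisymm (fun x hx => hCcent ▸ ⟨hx.1, hRC hx.2⟩) (le_inf hZC hZR)
  have hcardR : Nat.card R = 3 ^ 3 := by
    have := card_mul_card_inf_of_sup_eq_top hsup
    rw [hinf, hcard, hfixC, hZ] at this
    omega
  have hcentR : R ⊓ centralizer R = center Q :=
    le_antisymm (le_center_of_le_centralizer hsup (inf_le_left.trans hRC) inf_le_right)
      (le_inf hZR (center_le_centralizer _))
  refine ⟨⟨hZR, hZ, hcentR, hRR, frattiniOf_eq_center_of_card Nat.prime_three hcardR hZ hRR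
    hcentR⟩, hcardR, hsup, ?_⟩
  exact (commutator_eq_bot_iff_le_centralizer.mpr (le_centralizer_iff.mp hRC)).trans_le bot_le

theorem stmt_18 {Q : Type*} [Group Q] [Finite Q]
    (hcard : Nat.card Q = 3 ^ 7)
    (hZ : Nat.card (Subgroup.center Q) = 3)
    (hcomm : commutator Q = Subgroup.center Q)
    (hfrat : frattiniOf (⊤ : Subgroup Q) = Subgroup.center Q)
    (hexp : ∀ q : Q, q ^ 3 = 1)
    (r : MulAut Q) (hr : orderOf r = 2)
    (hrZ : ∀ z ∈ Subgroup.center Q, r z = z)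
    (hfixE : IsExtraspecialSub 3 (fixedSub r) (Subgroup.center Q))
    (hfixC : Nat.card (fixedSub r) = 3 ^ 5) :
    IsExtraspecialSub 3 (commSub r) (Subgroup.center Q) ∧
    Nat.card (commSub r) = 3 ^ 3 ∧
    fixedSub r ⊔ commSub r = ⊤ ∧
    ⁅fixedSub r, commSub r⁆ ≤ Subgroup.center Q :=
  stmt_18_general hcard hZ hcomm hexp r hr hrZ hfixE hfixC
end
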